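/- Let A be a Banach algebra such that A** has the T-w*w property for continuous linear maps T, S : A → A. If A** is weakly T''-S''-amenable (every T''-S''-derivation D : A** → A*** is inner), then A is weakly T-S-amenable (every T-S-derivation D : A → A* is inner). -/

import Mathlib

set_option maxHeartbeats 1000000

/-- The topological dual `E →L[𝕜] 𝕜` of a normed space, as `NormedSpace.Dual` was defined
in the older Mathlib (removed since; restored here with its old meaning). -/
abbrev NormedSpace.Dual (𝕜 : Type*) [NontriviallyNormedField 𝕜] (E : Type*)
    [SeminormedAddCommGroup E] [NormedSpace 𝕜 E] : Type _ := E →L[𝕜] 𝕜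

open Filter Topology ContinuousLinearMap NormedSpace

noncomputable section ArensSetup

/-- The adjoint (transpose) of a continuous linear map between normed spaces. -/
def adjCLM {E F : Type*} [SeminormedAddCommGroup E] [NormedSpace ℝ E]
    [SeminormedAddCommGroup F] [NormedSpace ℝ F] (T : E →L[ℝ] F) :
    Dual ℝ F →L[ℝ] Dual ℝ E :=
  (ContinuousLinearMap.compL ℝ E F ℝ).flip T

@[simp] theorem adjCLM_apply {E F : Type*} [SeminormedAddCommGroup E] [NormedSpace ℝ E]
    [SeminormedAddCommGroup F] [NormedSpace ℝ F] (T : E →L[ℝ] F) (g : Dual ℝ F) (x : E) :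
    adjCLM T g x = g (T x) := rfl

/-- One-step Arens-type adjoint of a bounded bilinear map:
`ext1 β g' e = g' ∘ (β e)`. -/
def ext1 {E F G : Type*} [SeminormedAddCommGroup E] [NormedSpace ℝ E]
    [SeminormedAddCommGroup F] [NormedSpace ℝ F] [SeminormedAddCommGroup G] [NormedSpace ℝ G]
    (β : E →L[ℝ] F →L[ℝ] G) : Dual ℝ G →L[ℝ] E →L[ℝ] Dual ℝ F :=
  ((ContinuousLinearMap.compL ℝ F G ℝ).flip.comp β).flip

@[simp] theorem ext1_apply {E F G : Type*} [SeminormedAddCommGroup E] [NormedSpace ℝ E]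
    [SeminormedAddCommGroup F] [NormedSpace ℝ F] [SeminormedAddCommGroup G] [NormedSpace ℝ G]
    (β : E →L[ℝ] F →L[ℝ] G) (g' : Dual ℝ G) (e : E) (f : F) :
    ext1 β g' e f = g' (β e f) := rfl

/-- Triple adjoint: the (first) Arens extension of a bounded bilinear map to the
second duals. -/
def ext3 {E F G : Type*} [SeminormedAddCommGroup E] [NormedSpace ℝ E]
    [SeminormedAddCommGroup F] [NormedSpace ℝ F] [SeminormedAddCommGroup G] [NormedSpace ℝ G]
    (β : E →L[ℝ] F →L[ℝ] G) :
    Dual ℝ (Dual ℝ E) →L[ℝ] Dual ℝ (Dual ℝ F) →L[ℝ] Dual ℝ (Dual ℝ G) :=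
  ext1 (ext1 (ext1 β))

variable (A : Type*) [NonUnitalNormedRing A] [NormedSpace ℝ A]
  [SMulCommClass ℝ A A] [IsScalarTower ℝ A A] [CompleteSpace A]

/-- The first (left) Arens product on `A**`: `⟨a''b'', a'⟩ = ⟨a'', b''a'⟩`. -/
def fArens : Dual ℝ (Dual ℝ A) →L[ℝ] Dual ℝ (Dual ℝ A) →L[ℝ] Dual ℝ (Dual ℝ A) :=
  ext3 (ContinuousLinearMap.mul ℝ A)

/-- The second (right) Arens product on `A**`: `⟨a''∘b'', a'⟩ = ⟨b'', a'∘a''⟩`. -/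
def sArens : Dual ℝ (Dual ℝ A) →L[ℝ] Dual ℝ (Dual ℝ A) →L[ℝ] Dual ℝ (Dual ℝ A) :=
  (ext3 (ContinuousLinearMap.mul ℝ A).flip).flip

/-- `A` is Arens regular when the two Arens products on `A**` coincide. -/
def ArensRegular : Prop := fArens A = sArens A

variable {A}

/-- Weak-star to weak continuity for a map from the dual of `E` into `F`. -/
def WStarToWCont {E F : Type*} [SeminormedAddCommGroup E] [NormedSpace ℝ E]
    [SeminormedAddCommGroup F] [NormedSpace ℝ F] (f : Dual ℝ E → F) : Prop :=
  Continuous fun x : WeakDual ℝ E => toWeakSpace ℝ F (f (WeakDual.toStrongDual x))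

variable (A)

/-- The second adjoint `T'' : A** → A**` of `T : A → A`. -/
def secondAdj (T : A →L[ℝ] A) : Dual ℝ (Dual ℝ A) →L[ℝ] Dual ℝ (Dual ℝ A) :=
  adjCLM (adjCLM T)

/-- Left action of `A` on `A*`: `⟨a·a', b⟩ = ⟨a', ba⟩`. -/
def dualLeft : A →L[ℝ] Dual ℝ A →L[ℝ] Dual ℝ A :=
  (ext1 (ContinuousLinearMap.mul ℝ A).flip).flip

/-- Right action of `A` on `A*`: `⟨a'·a, b⟩ = ⟨a', ab⟩`. -/
def dualRight : Dual ℝ A →L[ℝ] A →L[ℝ] Dual ℝ A :=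
  ext1 (ContinuousLinearMap.mul ℝ A)

/-- Left action of `A**` (first Arens product) on `A***`. -/
def dualLeft2 : Dual ℝ (Dual ℝ A) →L[ℝ] Dual ℝ (Dual ℝ (Dual ℝ A)) →L[ℝ]
    Dual ℝ (Dual ℝ (Dual ℝ A)) :=
  (ext1 (fArens A).flip).flip

/-- Right action of `A**` (first Arens product) on `A***`. -/
def dualRight2 : Dual ℝ (Dual ℝ (Dual ℝ A)) →L[ℝ] Dual ℝ (Dual ℝ A) →L[ℝ]
    Dual ℝ (Dual ℝ (Dual ℝ A)) :=
  ext1 (fArens A)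

end ArensSetup

section BimoduleSetup

set_option maxHeartbeats 1000000

open Filter Topology ContinuousLinearMap NormedSpace

/-- A Banach `A`-bimodule: bounded bilinear left and right actions satisfying the
usual compatibility axioms. -/
structure BanachBimodule (A X : Type*) [NonUnitalNormedRing A] [NormedSpace ℝ A]
    [SMulCommClass ℝ A A] [IsScalarTower ℝ A A]
    [NormedAddCommGroup X] [NormedSpace ℝ X] [CompleteSpace X] where
  l : A →L[ℝ] X →L[ℝ] X
  r : X →L[ℝ] A →L[ℝ] X
  l_mul : ∀ a b x, l (a * b) x = l a (l b x)
  r_mul : ∀ x a b, r (r x a) b = r x (a * b)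
  l_r : ∀ a x b, l a (r x b) = r (l a x) b

variable {A X : Type*} [NonUnitalNormedRing A] [NormedSpace ℝ A]
  [SMulCommClass ℝ A A] [IsScalarTower ℝ A A] [CompleteSpace A]
  [NormedAddCommGroup X] [NormedSpace ℝ X] [CompleteSpace X]

/-- Left action of `A` on `X*`: `⟨a·f, x⟩ = ⟨f, x·a⟩`. -/
noncomputable def modDualLeft (M : BanachBimodule A X) : A →L[ℝ] Dual ℝ X →L[ℝ] Dual ℝ X :=
  (ext1 M.r.flip).flip

/-- Right action of `A` on `X*`: `⟨f·a, x⟩ = ⟨f, a·x⟩`. -/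
noncomputable def modDualRight (M : BanachBimodule A X) : Dual ℝ X →L[ℝ] A →L[ℝ] Dual ℝ X :=
  ext1 M.l

/-- Left action of `A**` on `X**` (first Arens extension). -/
noncomputable def modL2 (M : BanachBimodule A X) :
    Dual ℝ (Dual ℝ A) →L[ℝ] Dual ℝ (Dual ℝ X) →L[ℝ] Dual ℝ (Dual ℝ X) :=
  ext3 M.l

/-- Right action of `A**` on `X**` (first Arens extension); `modR2 M x'' a'' = x''a''`. -/
noncomputable def modR2 (M : BanachBimodule A X) :
    Dual ℝ (Dual ℝ X) →L[ℝ] Dual ℝ (Dual ℝ A) →L[ℝ] Dual ℝ (Dual ℝ X) :=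
  ext3 M.r

/-- Left action of `A**` on `X***`: `⟨a''·x''', x''⟩ = ⟨x''', x''a''⟩`. -/
noncomputable def modL3 (M : BanachBimodule A X) :
    Dual ℝ (Dual ℝ A) →L[ℝ] Dual ℝ (Dual ℝ (Dual ℝ X)) →L[ℝ] Dual ℝ (Dual ℝ (Dual ℝ X)) :=
  (ext1 (modR2 M).flip).flip

/-- Right action of `A**` on `X***`: `⟨x'''·a'', x''⟩ = ⟨x''', a''x''⟩`. -/
noncomputable def modR3 (M : BanachBimodule A X) :
    Dual ℝ (Dual ℝ (Dual ℝ X)) →L[ℝ] Dual ℝ (Dual ℝ A) →L[ℝ] Dual ℝ (Dual ℝ (Dual ℝ X)) :=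
  ext1 (modL2 M)

end BimoduleSetup

section DerivationSetup

variable {B Y : Type*} [SeminormedAddCommGroup B] [NormedSpace ℝ B]
  [SeminormedAddCommGroup Y] [NormedSpace ℝ Y]

/-- `D` is a derivation with respect to the multiplication `m` and the module
actions `l`, `r`. -/
def IsDeriv (m : B →L[ℝ] B →L[ℝ] B) (l : B →L[ℝ] Y →L[ℝ] Y)
    (r : Y →L[ℝ] B →L[ℝ] Y) (D : B →L[ℝ] Y) : Prop :=
  ∀ a b, D (m a b) = l a (D b) + r (D a) b

/-- `D` is an inner derivation: `D a = a·y − y·a` for some fixed `y`. -/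
def IsInner (l : B →L[ℝ] Y →L[ℝ] Y) (r : Y →L[ℝ] B →L[ℝ] Y) (D : B →L[ℝ] Y) : Prop :=
  ∃ y, ∀ a, D a = l a y - r y a

/-- `D` is a `T-S`-derivation: `D(ab) = T(a)·D(b) + D(a)·S(b)`. -/
def IsTSDeriv (m : B →L[ℝ] B →L[ℝ] B) (l : B →L[ℝ] Y →L[ℝ] Y)
    (r : Y →L[ℝ] B →L[ℝ] Y) (T S : B →L[ℝ] B) (D : B →L[ℝ] Y) : Prop :=
  ∀ a b, D (m a b) = l (T a) (D b) + r (D a) (S b)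

/-- `D` is an inner `T-S`-derivation: `D a = T(a)·y − y·S(a)` for some fixed `y`. -/
def IsTSInner (l : B →L[ℝ] Y →L[ℝ] Y) (r : Y →L[ℝ] B →L[ℝ] Y)
    (T S : B →L[ℝ] B) (D : B →L[ℝ] Y) : Prop :=
  ∃ y, ∀ a, D a = l (T a) y - r y (S a)

end DerivationSetup

/-!
The bidual `D''` of a `T`-`S`-derivation `D : A → A*` is a `T''`-`S''`-derivation. When the first
factor lies in `A` this is a direct computation; both sides of the derivation identity are
weak-star continuous in the first factor (for `T''(a'')·D''(b'')` this is exactly the `T`-w*w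
property), so Goldstine's theorem extends it to all of `A**`. If `D''` is inner, implemented by
`x'''`, then `D` is implemented by the restriction of `x'''` to `A`.
-/

theorem Submodule.exists_dual_eq_zero_of_notMem_topologicalClosure {V : Type*} [AddCommGroup V]
    [Module ℝ V] [TopologicalSpace V] [IsTopologicalAddGroup V] [ContinuousSMul ℝ V]
    [LocallyConvexSpace ℝ V] (p : Submodule ℝ V) {x : V} (hx : x ∉ p.topologicalClosure) :
    ∃ f : StrongDual ℝ V, (∀ y ∈ p, f y = 0) ∧ f x ≠ 0 := by
  obtain ⟨f, u, hf, hu⟩ := geometric_hahn_banach_closed_point p.topologicalClosure.convex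
    p.isClosed_topologicalClosure hx
  have hf0 : ∀ y ∈ p, f y = 0 := by
    intro y hy
    by_contra hfy
    have h := hf (((u + 1) / f y) • y) (p.le_topologicalClosure (p.smul_mem _ hy))
    rw [map_smul, smul_eq_mul, div_mul_cancel₀ _ hfy] at h
    linarith
  refine ⟨f, hf0, fun hfx => ?_⟩
  linarith [hf 0 p.topologicalClosure.zero_mem, map_zero f]

theorem denseRange_inclusionInDoubleDual (E : Type*) [SeminormedAddCommGroup E]
    [NormedSpace ℝ E] :
    DenseRange (fun x : E => StrongDual.toWeakDual (inclusionInDoubleDual ℝ E x)) := by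
  let ι : E →ₗ[ℝ] WeakDual ℝ (Dual ℝ E) := (inclusionInDoubleDual ℝ E).toLinearMap
  have : LocallyConvexSpace ℝ (WeakDual ℝ (Dual ℝ E)) := WeakBilin.locallyConvexSpace
  refine dense_iff_closure_eq.2 <| Set.eq_univ_of_forall fun x => ?_
  rw [show Set.range _ = (LinearMap.range ι : Set _) from rfl,
    ← Submodule.topologicalClosure_coe]
  by_contra hx
  obtain ⟨f, hf, hfx⟩ := (LinearMap.range ι).exists_dual_eq_zero_of_notMem_topologicalClosure hx
  obtain ⟨φ, rfl⟩ := LinearMap.dualEmbedding_surjective _ f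
  have hφ : φ = 0 := ContinuousLinearMap.ext fun a => hf _ (LinearMap.mem_range_self ι a)
  exact hfx (by rw [hφ, map_zero]; rfl)

section BidualDerivation

variable {A : Type*} [NonUnitalNormedRing A] [NormedSpace ℝ A] [SMulCommClass ℝ A A]
  [IsScalarTower ℝ A A] {T S : A →L[ℝ] A} {D : A →L[ℝ] Dual ℝ A}

local notation "ι" => inclusionInDoubleDual ℝ A

theorem IsTSDeriv.adjCLM_adjCLM_fArens_inclusionInDoubleDual
    (hD : IsTSDeriv (ContinuousLinearMap.mul ℝ A) (dualLeft A) (dualRight A) T S D)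
    (a : A) (b'' : Dual ℝ (Dual ℝ A)) :
    adjCLM (adjCLM D) (fArens A (ι a) b'') =
      dualLeft2 A (secondAdj A T (ι a)) (adjCLM (adjCLM D) b'') +
        dualRight2 A (adjCLM (adjCLM D) (ι a)) (secondAdj A S b'') := by
  ext x''
  -- evaluated at `x''`, both sides are `b''` applied to functionals on `A`
  show b'' (dualRight A (adjCLM D x'') a) =
    b'' (adjCLM D (fArens A x'' (ι (T a)))) + b'' (adjCLM S (ext1 (ext1 (mul ℝ A)) x'' (D a)))
  rw [← map_add]
  congr 1
  ext b
  exact (congrArg x'' (hD a b)).trans (map_add x'' _ _)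

theorem IsTSDeriv.adjCLM_adjCLM
    (hT : ∀ a'' : Dual ℝ (Dual ℝ A), WStarToWCont (fun b'' => fArens A a'' (secondAdj A T b'')))
    (hD : IsTSDeriv (ContinuousLinearMap.mul ℝ A) (dualLeft A) (dualRight A) T S D) :
    IsTSDeriv (fArens A) (dualLeft2 A) (dualRight2 A) (secondAdj A T) (secondAdj A S)
      (adjCLM (adjCLM D)) := by
  intro a'' b''
  ext x''
  let D'' := adjCLM (adjCLM D)
  let lhs : WeakDual ℝ (Dual ℝ A) → ℝ := fun z => D'' (fArens A z.toStrongDual b'') x''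
  let rhs : WeakDual ℝ (Dual ℝ A) → ℝ := fun z =>
    dualLeft2 A (secondAdj A T z.toStrongDual) (D'' b'') x'' +
      dualRight2 A (D'' z.toStrongDual) (secondAdj A S b'') x''
  have hlhs : Continuous lhs :=
    WeakDual.eval_continuous (ext1 (ext1 (mul ℝ A)) b'' (adjCLM D x''))
  have hrhs : Continuous rhs :=
    ((WeakBilin.eval_continuous _ (D'' b'')).comp (hT x'')).add
      (WeakDual.eval_continuous (adjCLM D (fArens A (secondAdj A S b'') x'')))
  have hA : lhs ∘ (fun a => StrongDual.toWeakDual (ι a)) =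
      rhs ∘ (fun a => StrongDual.toWeakDual (ι a)) :=
    funext fun a => congrArg (· x'') (hD.adjCLM_adjCLM_fArens_inclusionInDoubleDual a b'')
  exact congrFun ((denseRange_inclusionInDoubleDual A).equalizer hlhs hrhs hA)
    (StrongDual.toWeakDual a'')

theorem IsTSInner.of_adjCLM_adjCLM
    (h : IsTSInner (dualLeft2 A) (dualRight2 A) (secondAdj A T) (secondAdj A S)
      (adjCLM (adjCLM D))) :
    IsTSInner (dualLeft A) (dualRight A) T S D := by
  obtain ⟨y''', hy⟩ := h
  exact ⟨adjCLM ι y''', fun a => ContinuousLinearMap.ext fun b => congrArg (· (ι b)) (hy (ι a))⟩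

end BidualDerivation

section Statements
set_option maxHeartbeats 1000000
open Filter Topology ContinuousLinearMap NormedSpace

variable {A : Type*} [NonUnitalNormedRing A] [NormedSpace ℝ A]
  [SMulCommClass ℝ A A] [IsScalarTower ℝ A A] [CompleteSpace A]

/-- If `A**` has the `T-w*w` property and `A**` is weakly `T''-S''`-amenable, then `A` is
weakly `T-S`-amenable. -/
theorem weaklyTSamenable_of_bidual (T S : A →L[ℝ] A)
    (hT : ∀ a'' : Dual ℝ (Dual ℝ A), WStarToWCont (fun b'' => fArens A a'' (secondAdj A T b'')))
    (hAm : ∀ G : Dual ℝ (Dual ℝ A) →L[ℝ] Dual ℝ (Dual ℝ (Dual ℝ A)),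
      IsTSDeriv (fArens A) (dualLeft2 A) (dualRight2 A)
        (secondAdj A T) (secondAdj A S) G →
      IsTSInner (dualLeft2 A) (dualRight2 A) (secondAdj A T) (secondAdj A S) G) :
    ∀ D : A →L[ℝ] Dual ℝ A,
      IsTSDeriv (ContinuousLinearMap.mul ℝ A) (dualLeft A) (dualRight A) T S D →
      IsTSInner (dualLeft A) (dualRight A) T S D :=
  fun _ hD => (hAm _ (hD.adjCLM_adjCLM hT)).of_adjCLM_adjCLM

end Statements
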